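/- Let P be a lazy, irreducible, aperiodic Markov chain on a finite state space K with stationary distribution π, and let A ⊆ K with 0 < π(A) ≤ 1/2. Then ψ_big(A) + ψ⁺(A) = Φ(A); consequently Φ(A)/2 ≤ ψ_big(A) ≤ Φ(A). -/

import Mathlib

open Finset MeasureTheory

noncomputable section

attribute [local instance] Classical.propDecidable

variable {K : Type*} [Fintype K]

/-- `matPow P t u v` is the `t`-step transition probability from `u` to `v`. -/
def matPow (P : K → K → ℝ) : ℕ → K → K → ℝ
  | 0 => fun u v => if u = v then 1 else 0
  | (t + 1) => fun u v => ∑ w, matPow P t u w * P w v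

/-- `P` is a stochastic matrix with (strictly positive) stationary distribution `π`. -/
structure IsMarkov (P : K → K → ℝ) (π : K → ℝ) : Prop where
  nonneg : ∀ u v, 0 ≤ P u v
  rowSum : ∀ u, ∑ v, P u v = 1
  piPos : ∀ v, 0 < π v
  piSum : ∑ v, π v = 1
  stationary : ∀ v, ∑ u, π u * P u v = π v

/-- `P` is lazy: every holding probability is at least `1/2`. -/
def IsLazy (P : K → K → ℝ) : Prop := ∀ u, (1 : ℝ) / 2 ≤ P u u

/-- irreducibility: every state can reach every other state. -/
def MCIrreducible (P : K → K → ℝ) : Prop := ∀ u v : K, ∃ t : ℕ, 0 < matPow P t u v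

/-- aperiodicity: the gcd of the return times of every state is `1`. -/
def MCAperiodic (P : K → K → ℝ) : Prop :=
  ∀ u : K, ∀ d : ℕ, (∀ t : ℕ, 0 < matPow P t u u → d ∣ t) → d ≤ 1

/-- reversibility: the detailed balance condition. -/
def IsReversible (P : K → K → ℝ) (π : K → ℝ) : Prop :=
  ∀ u v, π u * P u v = π v * P v u

/-- `π`-measure of a set. -/
def meas (π : K → ℝ) (A : Finset K) : ℝ := ∑ v ∈ A, π v

/-- the time reversal `P̄(u,v) = π(v) P(v,u) / π(u)`. -/
def rev (P : K → K → ℝ) (π : K → ℝ) (u v : K) : ℝ := π v * P v u / π u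

/-- transition probability from a point into a set, w.r.t. kernel `R`. -/
def setProb (R : K → K → ℝ) (v : K) (C : Finset K) : ℝ := ∑ c ∈ C, R v c

/-- the level set `A_u = {y : R(y,A) > u}`, w.r.t. kernel `R`. -/
def levelSet (R : K → K → ℝ) (A : Finset K) (u : ℝ) : Finset K :=
  Finset.univ.filter (fun y => u < setProb R y A)

/-- `g` is a fractional subset of `S` of measure `t`. -/
def IsFracSub (π : K → ℝ) (S : Finset K) (g : K → ℝ) (t : ℝ) : Prop :=
  (∀ v, 0 ≤ g v ∧ g v ≤ 1) ∧ (∀ v ∉ S, g v = 0) ∧ ∑ v, g v * π v = t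

/-- ergodic flow from a fractional subset `g` into `C`, w.r.t. kernel `R`. -/
def fracFlow (R : K → K → ℝ) (π : K → ℝ) (g : K → ℝ) (C : Finset K) : ℝ :=
  ∑ v, g v * π v * setProb R v C

/-- `Ψ(t, Aᶜ)` w.r.t. kernel `R`: for `t ≤ π(A)` the minimal flow into `Aᶜ` from a
fractional subset of `A` of measure `t`; for `t > π(A)` the minimal flow into `A`
from a fractional subset of `Aᶜ` of measure `1 − t`. -/
def Psi (R : K → K → ℝ) (π : K → ℝ) (A : Finset K) (t : ℝ) : ℝ :=
  if t ≤ meas π A then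
    sInf {q : ℝ | ∃ g : K → ℝ, IsFracSub π A g t ∧ q = fracFlow R π g Aᶜ}
  else
    sInf {q : ℝ | ∃ g : K → ℝ, IsFracSub π Aᶜ g (1 - t) ∧ q = fracFlow R π g A}

/-- `Ψ_big(t, Aᶜ)` w.r.t. kernel `R`: maximal flow into `Aᶜ` from a fractional
subset of `A` of measure `t`. -/
def PsiSup (R : K → K → ℝ) (π : K → ℝ) (A : Finset K) (t : ℝ) : ℝ :=
  sSup {q : ℝ | ∃ g : K → ℝ, IsFracSub π A g t ∧ q = fracFlow R π g Aᶜ}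

/-- the spread `ψ⁺(A)` (w.r.t. kernel `R`). -/
def psiPlus (R : K → K → ℝ) (π : K → ℝ) (A : Finset K) : ℝ :=
  (∫ t in (0:ℝ)..(meas π A), Psi R π A t) / (meas π A) ^ 2

/-- the quantity `ψ⁻(A)` (w.r.t. kernel `R`). -/
def psiMinus (R : K → K → ℝ) (π : K → ℝ) (A : Finset K) : ℝ :=
  (∫ t in (meas π A)..(1:ℝ), Psi R π A t) / (meas π A) ^ 2

/-- the modified spread `ψ_mod(A)` (w.r.t. kernel `R`). -/
def psiMod (R : K → K → ℝ) (π : K → ℝ) (A : Finset K) : ℝ :=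
  (∫ t in (0:ℝ)..(1:ℝ), Psi R π A t / min t (1 - t)) / meas π A

/-- the global spread `ψ_gl(A)` (w.r.t. kernel `R`). -/
def psiGl (R : K → K → ℝ) (π : K → ℝ) (A : Finset K) : ℝ :=
  (∫ t in (0:ℝ)..(1:ℝ), Psi R π A t) / (meas π A) ^ 2

/-- the quantity `ψ_big(A)` (w.r.t. kernel `R`). -/
def psiBig (R : K → K → ℝ) (π : K → ℝ) (A : Finset K) : ℝ :=
  (∫ t in (0:ℝ)..(meas π A), PsiSup R π A t) / (meas π A) ^ 2

/-- the evolving-set quantity `ψ_evo(A)`, with level sets taken w.r.t. kernel `R`. -/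
def psiEvo (R : K → K → ℝ) (π : K → ℝ) (A : Finset K) : ℝ :=
  1 - ∫ u in (0:ℝ)..(1:ℝ), Real.sqrt (meas π (levelSet R A u) / meas π A)

/-- ergodic flow `Q(B,C)`. -/
def ergFlow (P : K → K → ℝ) (π : K → ℝ) (B C : Finset K) : ℝ :=
  ∑ u ∈ B, ∑ v ∈ C, π u * P u v

/-- conductance `Φ(A)`. -/
def conductance (P : K → K → ℝ) (π : K → ℝ) (A : Finset K) : ℝ :=
  ergFlow P π A Aᶜ / meas π A

def Qone (P : K → K → ℝ) (π : K → ℝ) (C D : Finset K) : ℝ :=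
  ∑ v ∈ C, setProb P v D * π v

def Qtwo (P : K → K → ℝ) (π : K → ℝ) (C D : Finset K) : ℝ :=
  ∑ v ∈ C, Real.sqrt (setProb P v D) * π v

def Qinfty (P : K → K → ℝ) (π : K → ℝ) (C D : Finset K) : ℝ :=
  meas π (C.filter (fun v => 0 < setProb P v D))

/-- discrete gradient `h₁⁺(A)`. -/
def hOneP (P : K → K → ℝ) (π : K → ℝ) (A : Finset K) : ℝ :=
  Qone P π A Aᶜ / min (meas π A) (meas π Aᶜ)

/-- discrete gradient `h₁⁻(A)`. -/
def hOneM (P : K → K → ℝ) (π : K → ℝ) (A : Finset K) : ℝ :=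
  Qone P π Aᶜ A / min (meas π A) (meas π Aᶜ)

/-- discrete gradient `h₂⁺(A)`. -/
def hTwoP (P : K → K → ℝ) (π : K → ℝ) (A : Finset K) : ℝ :=
  Qtwo P π A Aᶜ / min (meas π A) (meas π Aᶜ)

/-- discrete gradient `h₂⁻(A)`. -/
def hTwoM (P : K → K → ℝ) (π : K → ℝ) (A : Finset K) : ℝ :=
  Qtwo P π Aᶜ A / min (meas π A) (meas π Aᶜ)

/-- discrete gradient `h_∞⁺(A)`. -/
def hInfP (P : K → K → ℝ) (π : K → ℝ) (A : Finset K) : ℝ :=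
  Qinfty P π A Aᶜ / min (meas π A) (meas π Aᶜ)

/-- discrete gradient `h_∞⁻(A)`. -/
def hInfM (P : K → K → ℝ) (π : K → ℝ) (A : Finset K) : ℝ :=
  Qinfty P π Aᶜ A / min (meas π A) (meas π Aᶜ)

/-- `p` is a probability distribution. -/
def IsDist (p : K → ℝ) : Prop := (∀ v, 0 ≤ p v) ∧ ∑ v, p v = 1

/-- the distribution after `t` steps starting from `p`. -/
def stepDist (P : K → K → ℝ) (p : K → ℝ) (t : ℕ) (v : K) : ℝ :=
  ∑ u, p u * matPow P t u v

/-- total variation distance. -/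
def tvDist (μ π : K → ℝ) : ℝ := (1 / 2) * ∑ v, |μ v - π v|

/-- chi-square distance. -/
def chi2Dist (μ π : K → ℝ) : ℝ := ∑ v, (μ v / π v - 1) ^ 2 * π v

/-- total variation mixing time `τ(ε)`: the max over initial distributions of the
least time at which total variation distance drops to `ε`. -/
def mixTV (P : K → K → ℝ) (π : K → ℝ) (ε : ℝ) : ℕ :=
  sSup {n : ℕ | ∃ p : K → ℝ, IsDist p ∧
    n = sInf {t : ℕ | tvDist (stepDist P p t) π ≤ ε}}

/-- chi-square mixing time `χ²(ε)`. -/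
def mixChi2 (P : K → K → ℝ) (π : K → ℝ) (ε : ℝ) : ℕ :=
  sSup {n : ℕ | ∃ p : K → ℝ, IsDist p ∧
    n = sInf {t : ℕ | chi2Dist (stepDist P p t) π ≤ ε}}

/-- `π₀ = min_v π(v)`. -/
def piMin (π : K → ℝ) : ℝ := sInf {r : ℝ | ∃ v : K, r = π v}

/-- `ψ⁺(x)`: worst spread over sets of measure at most `x`. -/
def psiPlusSize (R : K → K → ℝ) (π : K → ℝ) (x : ℝ) : ℝ :=
  sInf {r : ℝ | ∃ A : Finset K, 0 < meas π A ∧ meas π A ≤ x ∧ r = psiPlus R π A}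

/-- `ψ_evo(x)`: worst evolving-set quantity over sets of measure at most `x`. -/
def psiEvoSize (R : K → K → ℝ) (π : K → ℝ) (x : ℝ) : ℝ :=
  sInf {r : ℝ | ∃ A : Finset K, 0 < meas π A ∧ meas π A ≤ x ∧ r = psiEvo R π A}

/-- `ψ_big(x)`: worst `ψ_big` over sets of measure at most `x`. -/
def psiBigSize (R : K → K → ℝ) (π : K → ℝ) (x : ℝ) : ℝ :=
  sInf {r : ℝ | ∃ A : Finset K, 0 < meas π A ∧ meas π A ≤ x ∧ r = psiBig R π A}

/-- Dirichlet form. -/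
def dirichletForm (P : K → K → ℝ) (π : K → ℝ) (f : K → ℝ) : ℝ :=
  (1 / 2) * ∑ u, ∑ v, π u * P u v * (f u - f v) ^ 2

/-- variance w.r.t. `π`. -/
def varPi (π : K → ℝ) (f : K → ℝ) : ℝ :=
  ∑ v, π v * f v ^ 2 - (∑ v, π v * f v) ^ 2

/-- the spectral gap `λ`. -/
def specGap (P : K → K → ℝ) (π : K → ℝ) : ℝ :=
  sInf {r : ℝ | ∃ f : K → ℝ, (∃ u v, f u ≠ f v) ∧ r = dirichletForm P π f / varPi π f}

/-- `P_* = 1 − min_{u ∈ A} P(u, A)`. -/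
def Pstar (P : K → K → ℝ) (A : Finset K) : ℝ :=
  1 - sInf {r : ℝ | ∃ u ∈ A, r = setProb P u A}

/-- `P_min = min {P(u,v)/π(v) : u ∈ A, v ∈ Aᶜ, P(u,v) > 0}`. -/
def PminEdge (P : K → K → ℝ) (π : K → ℝ) (A : Finset K) : ℝ :=
  sInf {r : ℝ | ∃ u ∈ A, ∃ v ∈ Aᶜ, 0 < P u v ∧ r = P u v / π v}

/-- `w(t) = inf {y ∈ [0,1] : π(A_y) ≤ t}`. -/
def wfun (R : K → K → ℝ) (π : K → ℝ) (A : Finset K) (t : ℝ) : ℝ :=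
  sInf {y : ℝ | y ∈ Set.Icc (0:ℝ) 1 ∧ meas π (levelSet R A y) ≤ t}

/-!
The argument is a duality on fractional subsets: `g ↦ 1_A - g` maps fractional subsets of `A`
of measure `t` bijectively onto those of measure `π(A) - t` and sends the flow `Q(g, Aᶜ)` to
`Q(A, Aᶜ) - Q(g, Aᶜ)`. Hence `Ψ_big(t, Aᶜ) = Q(A, Aᶜ) - Ψ(π(A) - t, Aᶜ)`, and integrating over
`[0, π(A)]` gives `ψ_big(A) = Φ(A) - ψ⁺(A)`. The bounds follow from `0 ≤ ψ⁺(A) ≤ ψ_big(A)`, the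
latter because `Ψ ≤ Ψ_big` pointwise. Both `Ψ` and `Ψ_big` are monotone in `t` (scale a fractional
subset down), which makes them integrable.
-/

section FracFlow

variable {R : K → K → ℝ} {π : K → ℝ} {A C : Finset K} {g : K → ℝ} {t : ℝ}

def fracFlows (R : K → K → ℝ) (π : K → ℝ) (A : Finset K) (t : ℝ) : Set ℝ :=
  {q : ℝ | ∃ g : K → ℝ, IsFracSub π A g t ∧ q = fracFlow R π g Aᶜ}

lemma Psi_of_le (ht : t ≤ meas π A) : Psi R π A t = sInf (fracFlows R π A t) := by
  rw [Psi, if_pos ht]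
  rfl

lemma PsiSup_eq_sSup : PsiSup R π A t = sSup (fracFlows R π A t) := rfl

lemma fracFlow_indicator_sub :
    fracFlow R π ((A : Set K).indicator 1 - g) C = ergFlow R π A C - fracFlow R π g C := by
  simp only [fracFlow, ergFlow, setProb, ← Finset.mul_sum, Pi.sub_apply, sub_mul,
    Finset.sum_sub_distrib, Set.indicator_apply, Finset.mem_coe, Pi.one_apply, ite_mul,
    one_mul, zero_mul, Finset.sum_ite_mem, Finset.univ_inter]

lemma fracFlow_smul (c : ℝ) :
    fracFlow R π (c • g) C = c * fracFlow R π g C := by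
  simp only [fracFlow, Finset.mul_sum, Pi.smul_apply, smul_eq_mul, mul_assoc]

lemma fracFlow_nonneg (hR : ∀ u v, 0 ≤ R u v) (hπ : ∀ v, 0 ≤ π v) (hg : ∀ v, 0 ≤ g v) :
    0 ≤ fracFlow R π g C :=
  Finset.sum_nonneg fun v _ =>
    mul_nonneg (mul_nonneg (hg v) (hπ v)) (Finset.sum_nonneg fun c _ => hR v c)

lemma IsFracSub.indicator_sub (hg : IsFracSub π A g t) :
    IsFracSub π A ((A : Set K).indicator 1 - g) (meas π A - t) := by
  obtain ⟨hg01, hgA, hgt⟩ := hg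
  refine ⟨fun v => ?_, fun v hv => ?_, ?_⟩
  · by_cases hv : v ∈ A <;> simp [hv, hg01 v, hgA v]
  · simp [hv, hgA v hv]
  · simp only [Pi.sub_apply, sub_mul, Finset.sum_sub_distrib, hgt, Set.indicator_apply,
      Finset.mem_coe, Pi.one_apply, ite_mul, one_mul, zero_mul, Finset.sum_ite_mem,
      Finset.univ_inter, meas]

lemma IsFracSub.smul (hg : IsFracSub π A g t) {c : ℝ} (hc₀ : 0 ≤ c) (hc₁ : c ≤ 1) :
    IsFracSub π A (c • g) (c * t) := by
  obtain ⟨hg01, hgA, hgt⟩ := hg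
  refine ⟨fun v => ⟨mul_nonneg hc₀ (hg01 v).1, mul_le_one₀ hc₁ (hg01 v).1 (hg01 v).2⟩,
    fun v hv => by simp [hgA v hv], ?_⟩
  simp only [Pi.smul_apply, smul_eq_mul, mul_assoc, ← Finset.mul_sum, hgt]

lemma fracFlow_le_ergFlow (hR : ∀ u v, 0 ≤ R u v) (hπ : ∀ v, 0 ≤ π v)
    (hg : IsFracSub π A g t) : fracFlow R π g C ≤ ergFlow R π A C := by
  have := fracFlow_nonneg (C := C) hR hπ (fun v => (hg.indicator_sub.1 v).1)
  rw [fracFlow_indicator_sub] at this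
  linarith

lemma fracFlows_nonempty (hA : 0 < meas π A) (ht₀ : 0 ≤ t) (ht : t ≤ meas π A) :
    (fracFlows R π A t).Nonempty := by
  have hzero : IsFracSub π A 0 0 := ⟨by simp, by simp, by simp⟩
  have hA_frac : IsFracSub π A ((A : Set K).indicator 1) (meas π A) := by
    simpa using hzero.indicator_sub
  have h := hA_frac.smul (div_nonneg ht₀ hA.le) ((div_le_one hA).2 ht)
  rw [div_mul_cancel₀ t hA.ne'] at h
  exact ⟨_, _, h, rfl⟩

lemma fracFlows_bddBelow (hR : ∀ u v, 0 ≤ R u v) (hπ : ∀ v, 0 ≤ π v) :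
    BddBelow (fracFlows R π A t) :=
  ⟨0, fun _ ⟨_, hg, hq⟩ => hq ▸ fracFlow_nonneg hR hπ (fun v => (hg.1 v).1)⟩

lemma fracFlows_bddAbove (hR : ∀ u v, 0 ≤ R u v) (hπ : ∀ v, 0 ≤ π v) :
    BddAbove (fracFlows R π A t) :=
  ⟨ergFlow R π A Aᶜ, fun _ ⟨_, hg, hq⟩ => hq ▸ fracFlow_le_ergFlow hR hπ hg⟩

lemma fracFlows_meas_sub :
    fracFlows R π A (meas π A - t) = (ergFlow R π A Aᶜ - ·) '' fracFlows R π A t := by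
  ext q
  constructor
  · rintro ⟨g, hg, rfl⟩
    have hg' := hg.indicator_sub
    rw [sub_sub_cancel] at hg'
    refine ⟨_, ⟨_, hg', rfl⟩, ?_⟩
    rw [fracFlow_indicator_sub]
    exact sub_sub_cancel _ _
  · rintro ⟨_, ⟨g, hg, rfl⟩, rfl⟩
    exact ⟨_, hg.indicator_sub, fracFlow_indicator_sub.symm⟩

lemma PsiSup_eq_ergFlow_sub_Psi (hR : ∀ u v, 0 ≤ R u v) (hπ : ∀ v, 0 ≤ π v)
    (hA : 0 < meas π A) (ht₀ : 0 ≤ t) (ht : t ≤ meas π A) :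
    PsiSup R π A t = ergFlow R π A Aᶜ - Psi R π A (meas π A - t) := by
  rw [Psi_of_le (sub_le_self _ ht₀), fracFlows_meas_sub, PsiSup_eq_sSup,
    ← (antitone_const_tsub (α := ℝ)).map_csSup_of_continuousAt (by fun_prop)
      (fracFlows_nonempty hA ht₀ ht) (fracFlows_bddAbove hR hπ), sub_sub_cancel]

lemma Psi_le_PsiSup (hR : ∀ u v, 0 ≤ R u v) (hπ : ∀ v, 0 ≤ π v)
    (hA : 0 < meas π A) (ht₀ : 0 ≤ t) (ht : t ≤ meas π A) :
    Psi R π A t ≤ PsiSup R π A t := by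
  rw [Psi_of_le ht]
  exact csInf_le_csSup (fracFlows_nonempty hA ht₀ ht) (fracFlows_bddBelow hR hπ)
    (fracFlows_bddAbove hR hπ)

lemma Psi_nonneg (hR : ∀ u v, 0 ≤ R u v) (hπ : ∀ v, 0 ≤ π v) (ht : t ≤ meas π A) :
    0 ≤ Psi R π A t := by
  rw [Psi_of_le ht]
  exact Real.sInf_nonneg fun _ ⟨_, hg, hq⟩ => hq ▸ fracFlow_nonneg hR hπ (fun v => (hg.1 v).1)

lemma Psi_monotoneOn (hR : ∀ u v, 0 ≤ R u v) (hπ : ∀ v, 0 ≤ π v) (hA : 0 < meas π A) :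
    MonotoneOn (Psi R π A) (Set.Icc 0 (meas π A)) := by
  rintro s ⟨hs₀, hsA⟩ t ⟨ht₀, htA⟩ hst
  rcases hst.eq_or_lt with rfl | hlt
  · rfl
  have htpos : 0 < t := hs₀.trans_lt hlt
  rw [Psi_of_le hsA, Psi_of_le htA]
  refine le_csInf (fracFlows_nonempty hA ht₀ htA) ?_
  rintro _ ⟨g, hg, rfl⟩
  have hc₀ : 0 ≤ s / t := div_nonneg hs₀ htpos.le
  have hc₁ : s / t ≤ 1 := (div_le_one htpos).2 hst
  have hscaled := hg.smul hc₀ hc₁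
  rw [div_mul_cancel₀ s htpos.ne'] at hscaled
  calc sInf (fracFlows R π A s) ≤ s / t * fracFlow R π g Aᶜ :=
        csInf_le (fracFlows_bddBelow hR hπ) ⟨_, hscaled, (fracFlow_smul _).symm⟩
    _ ≤ fracFlow R π g Aᶜ :=
        mul_le_of_le_one_left (fracFlow_nonneg hR hπ (fun v => (hg.1 v).1)) hc₁

lemma PsiSup_monotoneOn (hR : ∀ u v, 0 ≤ R u v) (hπ : ∀ v, 0 ≤ π v) (hA : 0 < meas π A) :
    MonotoneOn (PsiSup R π A) (Set.Icc 0 (meas π A)) := by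
  rintro s ⟨hs₀, hsA⟩ t ⟨ht₀, htA⟩ hst
  rw [PsiSup_eq_ergFlow_sub_Psi hR hπ hA hs₀ hsA, PsiSup_eq_ergFlow_sub_Psi hR hπ hA ht₀ htA]
  gcongr
  exact Psi_monotoneOn hR hπ hA ⟨by linarith, by linarith⟩ ⟨by linarith, by linarith⟩
    (by linarith)

lemma intervalIntegrable_Psi (hR : ∀ u v, 0 ≤ R u v) (hπ : ∀ v, 0 ≤ π v)
    (hA : 0 < meas π A) : IntervalIntegrable (Psi R π A) volume 0 (meas π A) := by
  refine MonotoneOn.intervalIntegrable ?_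
  rw [Set.uIcc_of_le hA.le]
  exact Psi_monotoneOn hR hπ hA

lemma intervalIntegrable_PsiSup (hR : ∀ u v, 0 ≤ R u v) (hπ : ∀ v, 0 ≤ π v)
    (hA : 0 < meas π A) : IntervalIntegrable (PsiSup R π A) volume 0 (meas π A) := by
  refine MonotoneOn.intervalIntegrable ?_
  rw [Set.uIcc_of_le hA.le]
  exact PsiSup_monotoneOn hR hπ hA

lemma integral_PsiSup (hR : ∀ u v, 0 ≤ R u v) (hπ : ∀ v, 0 ≤ π v) (hA : 0 < meas π A) :
    ∫ t in (0 : ℝ)..meas π A, PsiSup R π A t =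
      ergFlow R π A Aᶜ * meas π A - ∫ t in (0 : ℝ)..meas π A, Psi R π A t := by
  have hdual : Set.EqOn (PsiSup R π A) (fun t => ergFlow R π A Aᶜ - Psi R π A (meas π A - t))
      (Set.uIcc 0 (meas π A)) := by
    intro t ht
    rw [Set.uIcc_of_le hA.le] at ht
    exact PsiSup_eq_ergFlow_sub_Psi hR hπ hA ht.1 ht.2
  have hreflect : ∫ t in (0 : ℝ)..meas π A, Psi R π A (meas π A - t) =
      ∫ t in (0 : ℝ)..meas π A, Psi R π A t := by
    simp [intervalIntegral.integral_comp_sub_left]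
  have hreflect_int :
      IntervalIntegrable (fun t => Psi R π A (meas π A - t)) volume 0 (meas π A) := by
    simpa using ((intervalIntegrable_Psi hR hπ hA).comp_sub_left (meas π A)).symm
  rw [intervalIntegral.integral_congr hdual,
    intervalIntegral.integral_sub intervalIntegrable_const hreflect_int, hreflect,
    intervalIntegral.integral_const]
  simp [mul_comm]

lemma psiBig_eq_conductance_sub_psiPlus (hR : ∀ u v, 0 ≤ R u v) (hπ : ∀ v, 0 ≤ π v)
    (hA : 0 < meas π A) :
    psiBig R π A = conductance R π A - psiPlus R π A := by
  rw [psiBig, psiPlus, conductance, integral_PsiSup hR hπ hA]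
  field_simp

lemma psiPlus_le_psiBig (hR : ∀ u v, 0 ≤ R u v) (hπ : ∀ v, 0 ≤ π v)
    (hA : 0 < meas π A) :
    psiPlus R π A ≤ psiBig R π A := by
  refine div_le_div_of_nonneg_right (intervalIntegral.integral_mono_on hA.le
    (intervalIntegrable_Psi hR hπ hA) (intervalIntegrable_PsiSup hR hπ hA) ?_) (sq_nonneg _)
  exact fun t ht => Psi_le_PsiSup hR hπ hA ht.1 ht.2

lemma psiPlus_nonneg (hR : ∀ u v, 0 ≤ R u v) (hπ : ∀ v, 0 ≤ π v)
    (hA : 0 < meas π A) : 0 ≤ psiPlus R π A :=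
  div_nonneg (intervalIntegral.integral_nonneg hA.le fun _ ht => Psi_nonneg hR hπ ht.2)
    (sq_nonneg _)

end FracFlow

theorem psiBig_add_psiPlus_eq_conductance_general
    (P : K → K → ℝ) (π : K → ℝ) (A : Finset K)
    (hM : IsMarkov P π)
    (hA0 : 0 < meas π A) :
    psiBig P π A + psiPlus P π A = conductance P π A ∧
    conductance P π A / 2 ≤ psiBig P π A ∧
    psiBig P π A ≤ conductance P π A := by
  have hπ : ∀ v, 0 ≤ π v := fun v => (hM.piPos v).le
  have hdual := psiBig_eq_conductance_sub_psiPlus hM.nonneg hπ hA0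
  have hle := psiPlus_le_psiBig hM.nonneg hπ hA0
  have hnonneg := psiPlus_nonneg hM.nonneg hπ hA0
  exact ⟨by linarith, by linarith, by linarith⟩

/-- `ψ_big(A) + ψ⁺(A) = Φ(A)`, hence `Φ(A)/2 ≤ ψ_big(A) ≤ Φ(A)`. -/
theorem psiBig_add_psiPlus_eq_conductance
    (P : K → K → ℝ) (π : K → ℝ) (A : Finset K)
    (hM : IsMarkov P π) (hlazy : IsLazy P)
    (hirr : MCIrreducible P) (hap : MCAperiodic P)
    (hA0 : 0 < meas π A) (hA : meas π A ≤ 1 / 2) :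
    psiBig P π A + psiPlus P π A = conductance P π A ∧
    conductance P π A / 2 ≤ psiBig P π A ∧
    psiBig P π A ≤ conductance P π A :=
  psiBig_add_psiPlus_eq_conductance_general P π A hM hA0
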